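/- arXiv:1704.02060 — 2 statements merged into one kernel-verified Lean document; each statement's English description precedes it below -/
import Mathlib

section
/- For two subspaces U and W of R^n, the eigenvalues of P_U + P_W that exceed 1 are exactly 1 + cos φ_i where φ_i ranges over the principal angles between U and W with cos φ_i > 0 (counted with multiplicity). -/
open Matrix

/-- View a plain vector as an element of Euclidean space. -/
noncomputable def toEuc {n : ℕ} (v : Fin n → ℝ) : EuclideanSpace ℝ (Fin n) := WithLp.toLp 2 v

/-- The row space of a matrix, as a subspace of Euclidean space `ℝ^n`. -/
noncomputable def rowSpace {m : Type*} {n : ℕ} (A : Matrix m (Fin n) ℝ) :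
    Submodule ℝ (EuclideanSpace ℝ (Fin n)) :=
  Submodule.span ℝ (Set.range fun i => toEuc (A i))

/-- The orthogonal projection matrix onto a subspace of `ℝ^n`. -/
noncomputable def projMat {n : ℕ} (U : Submodule ℝ (EuclideanSpace ℝ (Fin n))) :
    Matrix (Fin n) (Fin n) ℝ :=
  Matrix.toEuclideanLin.symm (U.subtype ∘ₗ (U.orthogonalProjectionOnto).toLinearMap)

/-- The operator (spectral) norm of a matrix. -/
noncomputable def opNorm {m : Type*} [Fintype m] {n : ℕ} (A : Matrix m (Fin n) ℝ) : ℝ :=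
  ‖(Matrix.toEuclideanLin A).toContinuousLinearMap‖

/-- Singular values of a matrix, in ascending order. -/
noncomputable def svalAsc {m : Type*} [Fintype m] {n : ℕ} (A : Matrix m (Fin n) ℝ) :
    Fin n → ℝ := fun i =>
  Real.sqrt ((Matrix.isHermitian_conjTranspose_mul_self A).eigenvalues
    (Tuple.sort (Matrix.isHermitian_conjTranspose_mul_self A).eigenvalues i))

/-- Singular values of a matrix, in descending order (`svalDesc A 0` is the largest). -/
noncomputable def svalDesc {m : Type*} [Fintype m] {n : ℕ} (A : Matrix m (Fin n) ℝ)
    (i : Fin n) : ℝ :=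
  svalAsc A i.rev

/-!
With `N = [B_U B_W]` we have `P_U + P_W = N Nᵀ`, whose nonzero eigenvalues are those of
`Nᵀ N = 1 + D`, where `D = [[0, C], [Cᵀ, 0]]` is the Hermitian dilation of `C = B_Uᵀ B_W`.
Conjugation by `diag(1, -1)` sends `D` to `-D`, so the spectrum of `D` is symmetric about `0`,
while `D² = diag(C Cᵀ, Cᵀ C)` carries the nonzero spectrum of `Cᵀ C` twice. Hence the positive
eigenvalues of `D` are the positive singular values of `C`, and the eigenvalues of `P_U + P_W`
above `1` are `1` plus these.
-/

open Polynomial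

namespace Multiset

theorem filter_lt_map_add {α : Type*} [AddCommGroup α] [LinearOrder α] [IsOrderedAddMonoid α]
    (a : α) (s : Multiset α) :
    (s.map (a + ·)).filter (a < ·) = (s.filter (0 < ·)).map (a + ·) := by
  rw [filter_map]
  exact congrArg _ (filter_congr fun x _ => lt_add_iff_pos_right a)

theorem filter_ne_zero_map_sq_of_map_neg_eq {α : Type*} [Ring α] [LinearOrder α]
    [IsStrictOrderedRing α] {s : Multiset α} (hs : s.map (- ·) = s) :
    (s.map (· ^ 2)).filter (· ≠ 0) = 2 • (s.filter (0 < ·)).map (· ^ 2) := by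
  have hneg : s.filter (· < 0) = (s.filter (0 < ·)).map (- ·) := by
    conv_lhs => rw [← hs]
    rw [filter_map]
    exact congrArg _ (filter_congr fun x _ => neg_lt_zero)
  have hsplit : s.filter (· ≠ 0) = s.filter (0 < ·) + s.filter (· < 0) := by
    rw [filter_add_filter, (filter_eq_nil (p := fun x => 0 < x ∧ x < 0)).mpr
      fun x _ h => lt_asymm h.1 h.2, add_zero]
    exact filter_congr fun x _ => ne_iff_lt_or_gt.trans or_comm
  calc (s.map (· ^ 2)).filter (· ≠ 0) = (s.filter (· ≠ 0)).map (· ^ 2) := by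
        rw [filter_map]
        exact congrArg _ (filter_congr fun x _ => pow_ne_zero_iff two_ne_zero)
    _ = 2 • (s.filter (0 < ·)).map (· ^ 2) := by
        rw [hsplit, hneg, map_add, map_map, two_nsmul]
        simp

theorem filter_pos_eq_filter_pos_map_sqrt {s t : Multiset ℝ} (hs : s.map (- ·) = s)
    (ht : ∀ x ∈ t, 0 ≤ x) (h : (s.map (· ^ 2)).filter (· ≠ 0) = 2 • t.filter (· ≠ 0)) :
    s.filter (0 < ·) = (t.map Real.sqrt).filter (0 < ·) := by
  rw [filter_ne_zero_map_sq_of_map_neg_eq hs] at h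
  have hsq := nsmul_right_injective two_ne_zero h
  calc s.filter (0 < ·) = ((s.filter (0 < ·)).map (· ^ 2)).map Real.sqrt := by
        rw [map_map]
        exact ((map_congr rfl fun x hx => Real.sqrt_sq (of_mem_filter hx).le).trans (map_id _)).symm
    _ = (t.map Real.sqrt).filter (0 < ·) := by
        rw [hsq, filter_map]
        exact congrArg _ (filter_congr fun x hx => by simp [Real.sqrt_pos, (ht x hx).lt_iff_ne'])

end Multiset

namespace Matrix

variable {m n : Type*}

theorem filter_roots_charpoly_mul_comm [Fintype m] [DecidableEq m] [Fintype n] [DecidableEq n]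
    {R : Type*} [CommRing R] [IsDomain R] (A : Matrix m n R) (B : Matrix n m R)
    (p : R → Prop) [DecidablePred p] (hp : ¬ p 0) :
    (A * B).charpoly.roots.filter p = (B * A).charpoly.roots.filter p := by
  have h := congrArg roots (charpoly_mul_comm' A B)
  simp only [roots_mul (mul_ne_zero (pow_ne_zero _ X_ne_zero) (charpoly_monic _).ne_zero),
    roots_pow, roots_X] at h
  simpa [Multiset.filter_add, Multiset.filter_nsmul, Multiset.filter_singleton, hp]
    using congrArg (Multiset.filter p) h

namespace IsHermitian

variable [Fintype n] [DecidableEq n] {A : Matrix n n ℝ}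

theorem univ_val_map_eigenvalues (hA : A.IsHermitian) :
    Finset.univ.val.map hA.eigenvalues = A.charpoly.roots := by
  simp [hA.roots_charpoly_eq_eigenvalues]

theorem roots_charpoly_cfc (hA : A.IsHermitian) (f : ℝ → ℝ) :
    (cfc f A).charpoly.roots = A.charpoly.roots.map f := by
  rw [hA.charpoly_cfc_eq, roots_prod, hA.roots_charpoly_eq_eigenvalues, Multiset.map_map]
  · simp [Multiset.bind_singleton]
  · exact Finset.prod_ne_zero_iff.mpr fun i _ => X_sub_C_ne_zero _

theorem roots_charpoly_one_add (hA : A.IsHermitian) :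
    (1 + A).charpoly.roots = A.charpoly.roots.map (1 + ·) := by
  rw [← hA.roots_charpoly_cfc, cfc_const_add (R := ℝ) 1 (fun x => x) A, cfc_id' ℝ A, map_one]

end IsHermitian

def hermitianDilation {R : Type*} [Zero R] [Star R] (C : Matrix m n R) :
    Matrix (m ⊕ n) (m ⊕ n) R :=
  fromBlocks 0 C Cᴴ 0

section Dilation

variable {R : Type*} [CommRing R] [StarRing R] (C : Matrix m n R)

theorem isHermitian_hermitianDilation : (hermitianDilation C).IsHermitian := by
  simp [hermitianDilation, IsHermitian, fromBlocks_conjTranspose]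

variable [Fintype m] [DecidableEq m] [Fintype n] [DecidableEq n]

theorem hermitianDilation_mul_self :
    hermitianDilation C * hermitianDilation C = fromBlocks (C * Cᴴ) 0 0 (Cᴴ * C) := by
  simp [hermitianDilation, fromBlocks_multiply]

theorem charpoly_neg_hermitianDilation :
    (-hermitianDilation C).charpoly = (hermitianDilation C).charpoly := by
  set J : Matrix (m ⊕ n) (m ⊕ n) R := fromBlocks 1 0 0 (-1)
  have hJJ : J * J = 1 := by simp [J, fromBlocks_multiply, fromBlocks_one]
  have hJDJ : J * hermitianDilation C * J = -hermitianDilation C := by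
    simp [J, hermitianDilation, fromBlocks_multiply, fromBlocks_neg]
  rw [← hJDJ, charpoly_mul_comm, ← Matrix.mul_assoc, hJJ, Matrix.one_mul]

end Dilation

section RealDilation

variable [Fintype m] [DecidableEq m] [Fintype n] [DecidableEq n] (C : Matrix m n ℝ)

theorem map_neg_roots_charpoly_hermitianDilation :
    (hermitianDilation C).charpoly.roots.map (- ·) = (hermitianDilation C).charpoly.roots := by
  have hD := isHermitian_hermitianDilation C
  rw [← hD.roots_charpoly_cfc, cfc_neg_id (R := ℝ) (a := hermitianDilation C),
    charpoly_neg_hermitianDilation]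

theorem filter_ne_zero_map_sq_roots_charpoly_hermitianDilation :
    ((hermitianDilation C).charpoly.roots.map (· ^ 2)).filter (· ≠ 0)
      = 2 • (Cᴴ * C).charpoly.roots.filter (· ≠ 0) := by
  have hD := isHermitian_hermitianDilation C
  rw [← hD.roots_charpoly_cfc, cfc_pow_id _ 2 hD.isSelfAdjoint, sq, hermitianDilation_mul_self,
    charpoly_fromBlocks_zero₁₂, roots_mul ((charpoly_monic _).mul (charpoly_monic _)).ne_zero,
    Multiset.filter_add, filter_roots_charpoly_mul_comm C Cᴴ _ (not_not.mpr rfl), two_nsmul]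

theorem filter_pos_roots_charpoly_hermitianDilation :
    (hermitianDilation C).charpoly.roots.filter (0 < ·)
      = ((Cᴴ * C).charpoly.roots.map Real.sqrt).filter (0 < ·) := by
  have hnonneg : ∀ x ∈ (Cᴴ * C).charpoly.roots, 0 ≤ x := by
    intro x hx
    rw [← (isHermitian_conjTranspose_mul_self C).univ_val_map_eigenvalues] at hx
    obtain ⟨i, -, rfl⟩ := Multiset.mem_map.mp hx
    exact (posSemidef_conjTranspose_mul_self C).eigenvalues_nonneg i
  exact Multiset.filter_pos_eq_filter_pos_map_sqrt (map_neg_roots_charpoly_hermitianDilation C)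
    hnonneg (filter_ne_zero_map_sq_roots_charpoly_hermitianDilation C)

end RealDilation

theorem transpose_fromCols_mul_fromCols [Fintype m] [DecidableEq m] [Fintype n] [DecidableEq n]
    {k : Type*} [Fintype k] (BU : Matrix k m ℝ) (BW : Matrix k n ℝ) (hBU : BUᵀ * BU = 1)
    (hBW : BWᵀ * BW = 1) :
    (fromCols BU BW)ᵀ * fromCols BU BW = 1 + hermitianDilation (BUᵀ * BW) := by
  rw [transpose_fromCols, fromRows_mul_fromCols, hBU, hBW, hermitianDilation, ← fromBlocks_one,
    fromBlocks_add]
  simp [conjTranspose_eq_transpose_of_trivial, transpose_mul]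

theorem range_toEuclideanLin {n : ℕ} {k : Type*} [Fintype k] [DecidableEq k]
    (B : Matrix (Fin n) k ℝ) : LinearMap.range (toEuclideanLin B) = rowSpace Bᵀ := by
  rw [LinearMap.range_eq_map, ← (EuclideanSpace.basisFun k ℝ).toBasis.span_eq, Submodule.map_span,
    ← Set.range_comp, rowSpace]
  congr 2
  ext j i
  simp [toEuc, toLpLin_apply]

end Matrix

theorem projMat_rowSpace_transpose {n : ℕ} {k : Type*} [Fintype k] [DecidableEq k]
    (B : Matrix (Fin n) k ℝ) (hB : Bᵀ * B = 1) : projMat (rowSpace Bᵀ) = B * Bᵀ := by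
  have hBBB : B * Bᵀ * B = B := by rw [Matrix.mul_assoc, hB, Matrix.mul_one]
  have hidem : IsIdempotentElem (toEuclideanLin (B * Bᵀ)) := by
    rw [IsIdempotentElem, Module.End.mul_eq_comp, ← toLpLin_mul, ← Matrix.mul_assoc, hBBB]
  have hsymm : (toEuclideanLin (B * Bᵀ)).IsSymmetric :=
    isSymmetric_toEuclideanLin_iff.mpr (isHermitian_mul_conjTranspose_self B)
  have hrange : LinearMap.range (toEuclideanLin (B * Bᵀ)) = rowSpace Bᵀ := by
    rw [← range_toEuclideanLin B]
    refine le_antisymm ?_ ?_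
    · rw [toLpLin_mul]
      exact LinearMap.range_comp_le_range _ _
    · conv_lhs => rw [← hBBB, toLpLin_mul 2 2 2]
      exact LinearMap.range_comp_le_range _ _
  rw [projMat, LinearEquiv.symm_apply_eq]
  exact (rowSpace Bᵀ).isSymmetricProjection_starProjection.ext ⟨hidem, hsymm⟩
    (by rw [Submodule.range_starProjection, hrange])

theorem univ_val_map_svalDesc {m : Type*} [Fintype m] {n : ℕ} (A : Matrix m (Fin n) ℝ) :
    Finset.univ.val.map (svalDesc A) = (Aᴴ * A).charpoly.roots.map Real.sqrt := by
  have hA := isHermitian_conjTranspose_mul_self A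
  have hsval : svalDesc A
      = (Real.sqrt ∘ hA.eigenvalues) ∘ (Fin.revPerm.trans (Tuple.sort hA.eigenvalues)) := rfl
  rw [← hA.univ_val_map_eigenvalues, Multiset.map_map, hsval, ← Multiset.map_map,
    Multiset.map_univ_val_equiv]

/-- for subspaces `U`, `W` of `ℝ^n` with orthonormal basis matrices
`BU`, `BW`, the eigenvalues of `P_U + P_W` exceeding `1` are exactly the numbers
`1 + cos φᵢ` with `cos φᵢ > 0`, where `cos φᵢ` ranges over the singular values of
`BUᵀ * BW` — as multisets, i.e. counted with multiplicity. -/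
theorem eigenvalues_proj_add_proj_gt_one (n p q : ℕ)
    (U W : Submodule ℝ (EuclideanSpace ℝ (Fin n)))
    (BU : Matrix (Fin n) (Fin p) ℝ) (BW : Matrix (Fin n) (Fin q) ℝ)
    (hBU1 : BUᵀ * BU = 1) (hBU2 : rowSpace BUᵀ = U)
    (hBW1 : BWᵀ * BW = 1) (hBW2 : rowSpace BWᵀ = W)
    (hP : (projMat U + projMat W).IsHermitian) :
    Multiset.filter (fun x => 1 < x)
        ((Finset.univ.val : Multiset (Fin n)).map hP.eigenvalues)
      = Multiset.filter (fun x => 1 < x)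
        ((Finset.univ.val : Multiset (Fin q)).map fun i => 1 + svalDesc (BUᵀ * BW) i) := by
  subst hBU2 hBW2
  set C := BUᵀ * BW
  set N := fromCols BU BW
  have hNNt : projMat (rowSpace BUᵀ) + projMat (rowSpace BWᵀ) = N * Nᵀ := by
    rw [projMat_rowSpace_transpose BU hBU1, projMat_rowSpace_transpose BW hBW1, transpose_fromCols,
      fromCols_mul_fromRows]
  calc Multiset.filter (1 < ·) (Finset.univ.val.map hP.eigenvalues)
      = (N * Nᵀ).charpoly.roots.filter (1 < ·) := by rw [hP.univ_val_map_eigenvalues, hNNt]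
    _ = (Nᵀ * N).charpoly.roots.filter (1 < ·) :=
        filter_roots_charpoly_mul_comm _ _ _ (lt_asymm one_pos)
    _ = ((hermitianDilation C).charpoly.roots.filter (0 < ·)).map (1 + ·) := by
        rw [transpose_fromCols_mul_fromCols BU BW hBU1 hBW1,
          (isHermitian_hermitianDilation C).roots_charpoly_one_add, Multiset.filter_lt_map_add]
    _ = (((Cᴴ * C).charpoly.roots.map Real.sqrt).filter (0 < ·)).map (1 + ·) := by
        rw [filter_pos_roots_charpoly_hermitianDilation]
    _ = Multiset.filter (1 < ·) (Finset.univ.val.map fun i => 1 + svalDesc C i) := by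
        rw [← Multiset.filter_lt_map_add, ← univ_val_map_svalDesc, Multiset.map_map]
        rfl
end

section
/- (Angle bound for perturbed common subspace, two blocks) Let J be a subspace of R^n and let W_1 and W_2 be subspaces (the perturbed versions of J inside two estimated row spaces) such that the largest principal angle between J and W_k is θ_k for k = 1,2. Then the largest principal angle φ between W_1 and W_2 satisfies sin φ ≤ sin(θ_1 + θ_2), provided θ_1 + θ_2 ≤ π/2. -/
open Matrix

/-!
Measure how far a vector `x` is from a subspace `K` by the angle `∠(x, P_K x)`: then
`‖x - P_K x‖ = ‖x‖ sin ∠(x, P_K x)`, and `P_K x` minimises the angle to `x` over `K`.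
For `w ∈ W₂`, the projection `u` of `w` onto `J` satisfies `∠(w, u) ≤ θ₂`, and the projection
`z` of `u` onto `W₁` satisfies `∠(u, z) ≤ θ₁`, so by the triangle inequality for angles
`∠(w, z) ≤ θ₁ + θ₂ ≤ π / 2` and `‖w - P_{W₁} w‖ ≤ ‖w‖ sin (θ₁ + θ₂)`.
The bound `∠(w, P_J w) ≤ θ₂` on `W₂` is where `dim W₂ = dim J` enters: for `θ₂ < π / 2` the
projection onto `W₂` is injective on `J`, hence onto `W₂`, so `w = P_{W₂} v` with `v ∈ J`
and `∠(v, w) ≤ θ₂`.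
-/

open Real InnerProductGeometry RealInnerProductSpace Module

namespace Submodule

variable {V : Type*} [NormedAddCommGroup V] [InnerProductSpace ℝ V]
  (K : Submodule ℝ V) [K.HasOrthogonalProjection]

theorem norm_sq_eq_norm_starProjection_sq_add (x : V) :
    ‖x‖ ^ 2 = ‖K.starProjection x‖ ^ 2 + ‖x - K.starProjection x‖ ^ 2 := by
  simpa using K.norm_sq_eq_add_norm_sq_starProjection x

theorem real_inner_starProjection_eq_of_mem_right (x : V) {z : V} (hz : z ∈ K) :
    ⟪K.starProjection x, z⟫ = ⟪x, z⟫ := by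
  rw [inner_starProjection_left_eq_right, starProjection_eq_self_iff.2 hz]

theorem cos_angle_starProjection_mul_norm (x : V) :
    cos (angle x (K.starProjection x)) * ‖x‖ = ‖K.starProjection x‖ := by
  by_cases hp : K.starProjection x = 0
  · simp [hp, angle_zero_right]
  have h := cos_angle_mul_norm_mul_norm x (K.starProjection x)
  rw [← K.real_inner_starProjection_eq_of_mem_right x (K.starProjection_apply_mem x),
    real_inner_self_eq_norm_sq, ← mul_assoc, sq] at h
  exact mul_right_cancel₀ (norm_ne_zero_iff.2 hp) h

theorem abs_cos_angle_mul_norm_le {x z : V} (hz : z ∈ K) :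
    |cos (angle x z)| * ‖x‖ ≤ ‖K.starProjection x‖ := by
  by_cases hz0 : z = 0
  · simp [hz0, angle_zero_right]
  have h : |cos (angle x z)| * ‖x‖ * ‖z‖ ≤ ‖K.starProjection x‖ * ‖z‖ := by
    rw [mul_assoc, ← abs_of_nonneg (by positivity : 0 ≤ ‖x‖ * ‖z‖), ← abs_mul,
      cos_angle_mul_norm_mul_norm, ← K.real_inner_starProjection_eq_of_mem_right x hz]
    exact abs_real_inner_le_norm _ _
  exact le_of_mul_le_mul_right h (norm_pos_iff.2 hz0)

theorem norm_sub_starProjection_le_sin_angle_mul {x z : V} (hz : z ∈ K) :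
    ‖x - K.starProjection x‖ ≤ sin (angle x z) * ‖x‖ := by
  have hcos := K.abs_cos_angle_mul_norm_le (x := x) hz
  have hpyth := K.norm_sq_eq_norm_starProjection_sq_add x
  have hsq : ‖x - K.starProjection x‖ ^ 2 ≤ (sin (angle x z) * ‖x‖) ^ 2 := by
    have := pow_le_pow_left₀ (by positivity) hcos 2
    rw [mul_pow, sq_abs] at this
    nlinarith [sin_sq_add_cos_sq (angle x z)]
  exact (pow_le_pow_iff_left₀ (norm_nonneg _)
    (mul_nonneg (sin_angle_nonneg x z) (norm_nonneg x)) two_ne_zero).1 hsq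

theorem angle_starProjection_le {x : V} (hx : x ≠ 0) {θ : ℝ} (hθ₀ : 0 ≤ θ) (hθπ : θ ≤ π)
    (h : ‖x - K.starProjection x‖ ≤ sin θ * ‖x‖) :
    angle x (K.starProjection x) ≤ θ := by
  have hpyth := K.norm_sq_eq_norm_starProjection_sq_add x
  have hsq : (cos θ * ‖x‖) ^ 2 ≤ ‖K.starProjection x‖ ^ 2 := by
    have := pow_le_pow_left₀ (norm_nonneg _) h 2
    nlinarith [sin_sq_add_cos_sq θ]
  have hcos : cos θ * ‖x‖ ≤ cos (angle x (K.starProjection x)) * ‖x‖ := by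
    rw [K.cos_angle_starProjection_mul_norm]
    exact abs_le_of_sq_le_sq' hsq (norm_nonneg _) |>.2
  exact (strictAntiOn_cos.le_iff_ge ⟨hθ₀, hθπ⟩ ⟨angle_nonneg _ _, angle_le_pi _ _⟩).1
    (le_of_mul_le_mul_right hcos (norm_pos_iff.2 hx))

variable {K}

theorem norm_sub_starProjection_le_sin_add {W : Submodule ℝ V} [W.HasOrthogonalProjection]
    {θ₁ θ₂ : ℝ} (hθ₁ : 0 ≤ θ₁) (hθ₂ : 0 ≤ θ₂) (hθ : θ₁ + θ₂ ≤ π / 2)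
    (hK : ∀ v ∈ K, ‖v - W.starProjection v‖ ≤ sin θ₁ * ‖v‖) {x : V}
    (hx : ‖x - K.starProjection x‖ ≤ sin θ₂ * ‖x‖) :
    ‖x - W.starProjection x‖ ≤ sin (θ₁ + θ₂) * ‖x‖ := by
  by_cases hx0 : x = 0
  · simp [hx0]
  set u := K.starProjection x
  have hxu : angle x u ≤ θ₂ := K.angle_starProjection_le hx0 hθ₂ (by linarith [pi_pos]) hx
  obtain ⟨z, hzW, hxz⟩ : ∃ z ∈ W, angle x z ≤ θ₁ + θ₂ := by
    by_cases hu : u = 0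
    -- `∠(x, 0) = π / 2` as well, so `z = 0` will do
    · exact ⟨0, W.zero_mem, by rw [← hu]; linarith⟩
    have huz : angle u (W.starProjection u) ≤ θ₁ :=
      W.angle_starProjection_le hu hθ₁ (by linarith [pi_pos]) (hK u (K.starProjection_apply_mem x))
    exact ⟨W.starProjection u, W.starProjection_apply_mem u,
      by linarith [angle_le_angle_add_angle x u (W.starProjection u)]⟩
  calc ‖x - W.starProjection x‖ ≤ sin (angle x z) * ‖x‖ :=
        W.norm_sub_starProjection_le_sin_angle_mul hzW
    _ ≤ sin (θ₁ + θ₂) * ‖x‖ := by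
      gcongr
      exact sin_le_sin_of_le_of_le_pi_div_two (by linarith [angle_nonneg x z, pi_pos]) hθ hxz

theorem exists_starProjection_eq_of_finrank_eq {J W : Submodule ℝ V} [FiniteDimensional ℝ J]
    [FiniteDimensional ℝ W] (hfr : finrank ℝ W = finrank ℝ J)
    (hJ : ∀ v ∈ J, W.starProjection v = 0 → v = 0) {w : V} (hw : w ∈ W) :
    ∃ v ∈ J, W.starProjection v = w := by
  have hinj : Function.Injective (W.orthogonalProjectionOnto.toLinearMap ∘ₗ J.subtype) :=
    (injective_iff_map_eq_zero _).2 fun v hv => Subtype.ext (hJ v v.2 (congrArg Subtype.val hv))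
  obtain ⟨v, hv⟩ :=
    (LinearMap.injective_iff_surjective_of_finrank_eq_finrank hfr.symm).1 hinj ⟨w, hw⟩
  exact ⟨v, v.2, congrArg Subtype.val hv⟩

theorem norm_sub_starProjection_le_of_finrank_eq {J W : Submodule ℝ V} [FiniteDimensional ℝ J]
    [FiniteDimensional ℝ W] (hfr : finrank ℝ W = finrank ℝ J) {θ : ℝ} (hθ₀ : 0 ≤ θ)
    (hθ : θ ≤ π / 2) (hJ : ∀ v ∈ J, ‖v - W.starProjection v‖ ≤ sin θ * ‖v‖) {w : V}
    (hw : w ∈ W) : ‖w - J.starProjection w‖ ≤ sin θ * ‖w‖ := by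
  rcases hθ.lt_or_eq with hθ | rfl
  · by_cases hw0 : w = 0
    · simp [hw0]
    have hsin : sin θ < 1 := by
      simpa using sin_lt_sin_of_lt_of_le_pi_div_two (by linarith [pi_pos]) le_rfl hθ
    have hJ₀ : ∀ v ∈ J, W.starProjection v = 0 → v = 0 := fun v hv hv0 => by
      have := hJ v hv
      rw [hv0, sub_zero] at this
      exact norm_eq_zero.1 (by nlinarith [norm_nonneg v])
    obtain ⟨v, hv, rfl⟩ := exists_starProjection_eq_of_finrank_eq hfr hJ₀ hw
    have hv0 : v ≠ 0 := by rintro rfl; simp at hw0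
    have hvw := W.angle_starProjection_le hv0 hθ₀ (by linarith [pi_pos]) (hJ v hv)
    calc _ ≤ sin (angle (W.starProjection v) v) * ‖W.starProjection v‖ :=
          J.norm_sub_starProjection_le_sin_angle_mul hv
      _ ≤ sin θ * ‖W.starProjection v‖ := by
          gcongr
          rw [angle_comm]
          exact sin_le_sin_of_le_of_le_pi_div_two
            (by linarith [angle_nonneg v (W.starProjection v), pi_pos]) hθ.le hvw
  · simpa [angle_zero_right] using J.norm_sub_starProjection_le_sin_angle_mul (x := w) J.zero_mem

end Submodule

section ProjMat

variable {n : ℕ}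

theorem toEuclideanLin_projMat (U : Submodule ℝ (EuclideanSpace ℝ (Fin n))) :
    toEuclideanLin (projMat U) = U.starProjection.toLinearMap :=
  toEuclideanLin.apply_symm_apply _

theorem toEuclideanLin_one_sub_projMat_mul_projMat_apply
    (U V : Submodule ℝ (EuclideanSpace ℝ (Fin n))) (x : EuclideanSpace ℝ (Fin n)) :
    toEuclideanLin ((1 - projMat U) * projMat V) x =
      V.starProjection x - U.starProjection (V.starProjection x) := by
  simp [Matrix.sub_mul, toEuclideanLin_projMat]

theorem opNorm_one_sub_projMat_mul_projMat_le_iff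
    (U V : Submodule ℝ (EuclideanSpace ℝ (Fin n))) {c : ℝ} (hc : 0 ≤ c) :
    opNorm ((1 - projMat U) * projMat V) ≤ c ↔
      ∀ v ∈ V, ‖v - U.starProjection v‖ ≤ c * ‖v‖ := by
  rw [opNorm, ContinuousLinearMap.opNorm_le_iff hc]
  simp only [LinearMap.coe_toContinuousLinearMap', toEuclideanLin_one_sub_projMat_mul_projMat_apply]
  refine ⟨fun h v hv => ?_, fun h x => ?_⟩
  · simpa [Submodule.starProjection_eq_self_iff.2 hv] using h v
  · calc _ ≤ c * ‖V.starProjection x‖ := h _ (V.starProjection_apply_mem x)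
      _ ≤ c * ‖x‖ := by gcongr; exact V.norm_starProjection_apply_le x

end ProjMat

theorem perturbed_joint_angle_bound_general (n : ℕ)
    (J W1 W2 : Submodule ℝ (EuclideanSpace ℝ (Fin n)))
    (hd2 : Module.finrank ℝ W2 = Module.finrank ℝ J)
    (θ1 θ2 : ℝ) (hθ1nonneg : 0 ≤ θ1) (hθ2nonneg : 0 ≤ θ2)
    (hθ1 : Real.sin θ1 = opNorm ((1 - projMat W1) * projMat J))
    (hθ2 : Real.sin θ2 = opNorm ((1 - projMat W2) * projMat J))
    (hsum : θ1 + θ2 ≤ Real.pi / 2) :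
    opNorm ((1 - projMat W1) * projMat W2) ≤ Real.sin (θ1 + θ2) := by
  have hsin_nonneg {θ : ℝ} (h₀ : 0 ≤ θ) (h : θ ≤ π / 2) : 0 ≤ sin θ :=
    sin_nonneg_of_nonneg_of_le_pi h₀ (by linarith [pi_pos])
  have hJW1 := (opNorm_one_sub_projMat_mul_projMat_le_iff W1 J
    (hsin_nonneg hθ1nonneg (by linarith))).1 hθ1.ge
  have hJW2 := (opNorm_one_sub_projMat_mul_projMat_le_iff W2 J
    (hsin_nonneg hθ2nonneg (by linarith))).1 hθ2.ge
  refine (opNorm_one_sub_projMat_mul_projMat_le_iff W1 W2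
    (hsin_nonneg (by linarith) hsum)).2 fun w hw => ?_
  have hW2J :=
    Submodule.norm_sub_starProjection_le_of_finrank_eq hd2 hθ2nonneg (by linarith) hJW2 hw
  exact Submodule.norm_sub_starProjection_le_sin_add hθ1nonneg hθ2nonneg hsum hJW1 hW2J

/-- angle bound for a perturbed common subspace, two blocks.
If the largest principal angle between `J` and `W k` is `θ k` (`k = 1, 2`), so that
`sin (θ k) = ‖(I − P_{W k}) P_J‖`, and `θ₁ + θ₂ ≤ π/2`, then the largest principal angle
`φ` between `W₁` and `W₂` satisfies `sin φ = ‖(I − P_{W₁}) P_{W₂}‖ ≤ sin (θ₁ + θ₂)`. -/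
theorem perturbed_joint_angle_bound (n : ℕ)
    (J W1 W2 : Submodule ℝ (EuclideanSpace ℝ (Fin n)))
    (hd1 : Module.finrank ℝ W1 = Module.finrank ℝ J)
    (hd2 : Module.finrank ℝ W2 = Module.finrank ℝ J)
    (θ1 θ2 : ℝ) (hθ1nonneg : 0 ≤ θ1) (hθ2nonneg : 0 ≤ θ2)
    (hθ1 : Real.sin θ1 = opNorm ((1 - projMat W1) * projMat J))
    (hθ2 : Real.sin θ2 = opNorm ((1 - projMat W2) * projMat J))
    (hsum : θ1 + θ2 ≤ Real.pi / 2) :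
    opNorm ((1 - projMat W1) * projMat W2) ≤ Real.sin (θ1 + θ2) :=
  perturbed_joint_angle_bound_general n J W1 W2 hd2 θ1 θ2 hθ1nonneg hθ2nonneg hθ1 hθ2 hsum
end
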